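/- arXiv:2604.08860 — 2 statements merged into one kernel-verified Lean document; each statement's English description precedes it below -/
import Mathlib

section
/- Consider the networked control causal factorization over a horizon T with finite alphabets. Fix a stage cost c : 𝕏 × 𝕌 → ℝ and λ ≥ 0, and for each pair of policies (π^e, π^c) define the objective L(π^e, π^c) = Σ_{t=1}^T E[c(X_t, U_t)] + λ · I(S^T, U^T; Y^T), where the expectation and mutual information are taken under the joint pmf induced by (π^e, π^c). Then the infimum of L(π^e, π^c) over all pairs of (stochastic) conditional-pmf policies equals the infimum of L(π^e, π^c) over all quantizer policies π^e and all DETERMINISTIC controllers π^c, i.e. those for which for each t there is a function μ_t : 𝕊^t × 𝕌^{t-1} → 𝕌 with π^c_t(u_t | s^t, u^{t-1}) = 1 if u_t = μ_t(s^t, u^{t-1}) and 0 otherwise. In other words, restricting the controller to deterministic functions incurs no loss of optimality. -/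
open scoped BigOperators Classical

noncomputable section

namespace NCS

/-- Probability of an event under a pmf `P` on a finite sample space. -/
def pr {Ω : Type} [Fintype Ω] (P : Ω → ℝ) (E : Ω → Prop) : ℝ :=
  ∑ ω, if E ω then P ω else 0

/-- Conditional probability `P(E | F)`, as a ratio of probabilities. -/
def condPr {Ω : Type} [Fintype Ω] (P : Ω → ℝ) (E F : Ω → Prop) : ℝ :=
  pr P (fun ω => E ω ∧ F ω) / pr P F

/-- Mutual information `I(f ; g)` between two finitely-valued random variables
`f` and `g` defined on a finite sample space with pmf `P` (natural logarithm;
summands with zero probability vanish since `0 * log _ = 0`). -/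
def MI {Ω A B : Type} [Fintype Ω] [Fintype A] [Fintype B]
    (P : Ω → ℝ) (f : Ω → A) (g : Ω → B) : ℝ :=
  ∑ a : A, ∑ b : B,
    pr P (fun ω => f ω = a ∧ g ω = b) *
      Real.log (pr P (fun ω => f ω = a ∧ g ω = b) /
        (pr P (fun ω => f ω = a) * pr P (fun ω => g ω = b)))

/-- Conditional mutual information `I(f ; g | h)`. -/
def condMI {Ω A B C : Type} [Fintype Ω] [Fintype A] [Fintype B] [Fintype C]
    (P : Ω → ℝ) (f : Ω → A) (g : Ω → B) (h : Ω → C) : ℝ :=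
  ∑ a : A, ∑ b : B, ∑ c : C,
    pr P (fun ω => f ω = a ∧ g ω = b ∧ h ω = c) *
      Real.log (condPr P (fun ω => f ω = a ∧ g ω = b) (fun ω => h ω = c) /
        (condPr P (fun ω => f ω = a) (fun ω => h ω = c) *
          condPr P (fun ω => g ω = b) (fun ω => h ω = c)))


/-! ### The networked control causal factorization -/

variable {T : ℕ} {X Y Z S U : Type}

/-- The strict history `a^{t-1} = (a_1, …, a_{t-1})` of a trajectory (0-indexed). -/
def hist {A : Type} (f : Fin T → A) (t : Fin T) : Fin t.1 → A :=
  fun i => f ⟨i.1, lt_trans i.2 t.2⟩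

/-- The inclusive history `a^t = (a_1, …, a_t)` of a trajectory (0-indexed). -/
def histIncl {A : Type} (f : Fin T → A) (t : Fin T) : Fin (t.1 + 1) → A :=
  fun i => f ⟨i.1, lt_of_le_of_lt (Nat.lt_succ_iff.mp i.2) t.2⟩

/-- Drop the last entry of a history. -/
def trunc {A : Type} {n : ℕ} (f : Fin (n + 1) → A) : Fin n → A :=
  fun i => f ⟨i.1, Nat.lt_succ_of_lt i.2⟩

/-- The previous value `a_{t-1}`, or `none` at the initial time (vacuous conditioning). -/
def prevO {A : Type} (f : Fin T → A) (t : Fin T) : Option A :=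
  if t.1 = 0 then none
  else some (f ⟨t.1 - 1, lt_of_le_of_lt (Nat.sub_le _ _) t.2⟩)

/-- The previous triple `(x_{t-1}, y_{t-1}, u_{t-1})`, or `none` at the initial time. -/
def prev3 (x : Fin T → X) (y : Fin T → Y) (u : Fin T → U) (t : Fin T) :
    Option (X × Y × U) :=
  if t.1 = 0 then none
  else some (x ⟨t.1 - 1, lt_of_le_of_lt (Nat.sub_le _ _) t.2⟩,
             y ⟨t.1 - 1, lt_of_le_of_lt (Nat.sub_le _ _) t.2⟩,
             u ⟨t.1 - 1, lt_of_le_of_lt (Nat.sub_le _ _) t.2⟩)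

/-- The fixed conditional pmfs (kernels) `P_Y(y_t | y_{t-1})`,
`P_X(x_t | x_{t-1}, y_{t-1}, u_{t-1})`, `P_Z(z_t | x_t)`; conditioning on `none`
encodes the vacuous conditioning at `t = 1`. -/
structure Kernels (X Y Z U : Type) [Fintype X] [Fintype Y] [Fintype Z] [Fintype U] where
  PY : Option Y → Y → ℝ
  PX : Option (X × Y × U) → X → ℝ
  PZ : X → Z → ℝ
  PY_nonneg : ∀ p y, 0 ≤ PY p y
  PY_sum : ∀ p, ∑ y, PY p y = 1
  PX_nonneg : ∀ p x, 0 ≤ PX p x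
  PX_sum : ∀ p, ∑ x, PX p x = 1
  PZ_nonneg : ∀ x z, 0 ≤ PZ x z
  PZ_sum : ∀ x, ∑ z, PZ x z = 1

/-- A quantizer policy family `π^e_t(s_t | z^t, s^{t-1}, u^{t-1})`. -/
def QPol (T : ℕ) (Z S U : Type) : Type :=
  (t : Fin T) → (Fin (t.1 + 1) → Z) → (Fin t.1 → S) → (Fin t.1 → U) → S → ℝ

/-- A controller policy family `π^c_t(u_t | s^t, u^{t-1})`. -/
def CPol (T : ℕ) (S U : Type) : Type :=
  (t : Fin T) → (Fin (t.1 + 1) → S) → (Fin t.1 → U) → U → ℝ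

/-- `π^e` is a family of conditional pmfs. -/
def IsQPol [Fintype S] (πe : QPol T Z S U) : Prop :=
  (∀ t zs ss us st, 0 ≤ πe t zs ss us st) ∧ (∀ t zs ss us, ∑ st, πe t zs ss us st = 1)

/-- `π^c` is a family of conditional pmfs. -/
def IsCPol [Fintype U] (πc : CPol T S U) : Prop :=
  (∀ t ss us ut, 0 ≤ πc t ss us ut) ∧ (∀ t ss us, ∑ ut, πc t ss us ut = 1)

/-- The sample space of full trajectories `(x^T, y^T, z^T, s^T, u^T)`. -/
abbrev Traj (T : ℕ) (X Y Z S U : Type) : Type :=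
  (Fin T → X) × (Fin T → Y) × (Fin T → Z) × (Fin T → S) × (Fin T → U)

def trX (ω : Traj T X Y Z S U) : Fin T → X := ω.1
def trY (ω : Traj T X Y Z S U) : Fin T → Y := ω.2.1
def trZ (ω : Traj T X Y Z S U) : Fin T → Z := ω.2.2.1
def trS (ω : Traj T X Y Z S U) : Fin T → S := ω.2.2.2.1
def trU (ω : Traj T X Y Z S U) : Fin T → U := ω.2.2.2.2

variable [Fintype X] [Fintype Y] [Fintype Z] [Fintype S] [Fintype U]

/-- The joint pmf of the networked control causal factorization:
`P(x^T, y^T, z^T, s^T, u^T) = ∏_t P_Y(y_t|y_{t-1}) P_X(x_t|x_{t-1},y_{t-1},u_{t-1})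
P_Z(z_t|x_t) π^e_t(s_t|z^t,s^{t-1},u^{t-1}) π^c_t(u_t|s^t,u^{t-1})`. -/
def joint (K : Kernels X Y Z U) (πe : QPol T Z S U) (πc : CPol T S U) :
    Traj T X Y Z S U → ℝ :=
  fun (x, y, z, s, u) =>
    ∏ t : Fin T,
      K.PY (prevO y t) (y t) *
      K.PX (prev3 x y u t) (x t) *
      K.PZ (x t) (z t) *
      πe t (histIncl z t) (hist s t) (hist u t) (s t) *
      πc t (histIncl s t) (hist u t) (u t)


/-- The total expected stage cost `∑_{t=1}^T E[c(X_t, U_t)]`. -/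
def expCost (K : Kernels X Y Z U) (πe : QPol T Z S U) (πc : CPol T S U)
    (c : X × U → ℝ) : ℝ :=
  ∑ t : Fin T, ∑ ω : Traj T X Y Z S U, joint K πe πc ω * c (trX ω t, trU ω t)

/-- The privacy-aware objective
`L(π^e, π^c) = ∑_{t=1}^T E[c(X_t,U_t)] + λ·I(S^T, U^T; Y^T)`. -/
def objective (K : Kernels X Y Z U) (c : X × U → ℝ) (lam : ℝ)
    (πe : QPol T Z S U) (πc : CPol T S U) : ℝ :=
  expCost K πe πc c +
    lam * MI (joint K πe πc) (fun ω => (trS ω, trU ω)) (fun ω => trY ω)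

/-- A controller policy is deterministic if it is the indicator of a function
`μ_t : 𝕊^t × 𝕌^{t-1} → 𝕌`. -/
def IsDet [Fintype S] [Fintype U] (πc : CPol T S U) : Prop :=
  ∃ μ : (t : Fin T) → (Fin (t.1 + 1) → S) → (Fin t.1 → U) → U,
    ∀ t ss us ut, πc t ss us ut = if ut = μ t ss us then 1 else 0


/-! ### Auxiliary lemmas about `pr` -/

section PrAux
variable {Ω A B ι : Type} [Fintype Ω] [Fintype A] [Fintype B] [Fintype ι]

lemma pr_nonneg {P : Ω → ℝ} (hP : ∀ ω, 0 ≤ P ω) (E : Ω → Prop) : 0 ≤ pr P E :=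
  Finset.sum_nonneg fun ω _ => by by_cases h : E ω <;> simp [h, hP ω]

lemma pr_mono {P : Ω → ℝ} (hP : ∀ ω, 0 ≤ P ω) {E F : Ω → Prop}
    (h : ∀ ω, E ω → F ω) : pr P E ≤ pr P F := by
  refine Finset.sum_le_sum fun ω _ => ?_
  by_cases hE : E ω
  · simp [hE, h ω hE]
  · by_cases hF : F ω <;> simp [hE, hF, hP ω]

lemma pr_congr {P Q : Ω → ℝ} {E F : Ω → Prop} (hEF : ∀ ω, E ω ↔ F ω)
    (hPQ : ∀ ω, E ω → P ω = Q ω) : pr P E = pr Q F := by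
  refine Finset.sum_congr rfl fun ω _ => ?_
  by_cases hE : E ω
  · rw [if_pos hE, if_pos ((hEF ω).mp hE), hPQ ω hE]
  · rw [if_neg hE, if_neg (fun h => hE ((hEF ω).mpr h))]

lemma pr_eq_zero {P : Ω → ℝ} {E : Ω → Prop} (h : ∀ ω, E ω → P ω = 0) :
    pr P E = 0 := by
  refine Finset.sum_eq_zero fun ω _ => ?_
  by_cases hE : E ω <;> simp [hE, h ω]

lemma pr_sum (P : ι → Ω → ℝ) (v : ι → ℝ) (E : Ω → Prop) :
    pr (fun ω => ∑ i, v i * P i ω) E = ∑ i, v i * pr (P i) E := by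
  unfold pr
  have h1 : ∀ ω, (if E ω then ∑ i, v i * P i ω else 0)
      = ∑ i, (if E ω then v i * P i ω else 0) := by
    intro ω; by_cases hE : E ω <;> simp [hE]
  rw [Finset.sum_congr rfl fun ω _ => h1 ω, Finset.sum_comm]
  refine Finset.sum_congr rfl fun i _ => ?_
  rw [Finset.mul_sum]
  refine Finset.sum_congr rfl fun ω _ => ?_
  by_cases hE : E ω <;> simp [hE]

lemma pr_le_card {P : Ω → ℝ} (hP : ∀ ω, P ω ≤ 1) (hP0 : ∀ ω, 0 ≤ P ω)
    (E : Ω → Prop) : pr P E ≤ (Fintype.card Ω : ℝ) := by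
  have : pr P E ≤ ∑ _ω : Ω, (1 : ℝ) := by
    refine Finset.sum_le_sum fun ω _ => ?_
    by_cases hE : E ω <;> simp [hE, hP ω]
  simpa using this

end PrAux

/-! ### Mixture decomposition of mutual information -/

lemma MI_mix {Ω A B ι : Type} [Fintype Ω] [Fintype A] [Fintype B] [Fintype ι]
    [Nonempty ι]
    (P : ι → Ω → ℝ) (v : ι → ℝ) (f : Ω → A) (g : Ω → B) (r : B → ℝ)
    (hP : ∀ i ω, 0 ≤ P i ω) (hv : ∀ i, 0 ≤ v i) (hv1 : ∑ i, v i = 1)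
    (hmarg : ∀ i b, pr (P i) (fun ω => g ω = b) = r b)
    (hdich : ∀ a : A,
      (∃ i₀, ∀ i, i ≠ i₀ → pr (P i) (fun ω => f ω = a) = 0) ∨
      (∀ i j, (∀ b, pr (P i) (fun ω => f ω = a ∧ g ω = b)
                  = pr (P j) (fun ω => f ω = a ∧ g ω = b)) ∧
        pr (P i) (fun ω => f ω = a) = pr (P j) (fun ω => f ω = a))) :
    MI (fun ω => ∑ i, v i * P i ω) f g = ∑ i, v i * MI (P i) f g := by
  unfold MI
  have key : ∀ a b,
      pr (fun ω => ∑ i, v i * P i ω) (fun ω => f ω = a ∧ g ω = b) *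
        Real.log (pr (fun ω => ∑ i, v i * P i ω) (fun ω => f ω = a ∧ g ω = b) /
          (pr (fun ω => ∑ i, v i * P i ω) (fun ω => f ω = a) *
            pr (fun ω => ∑ i, v i * P i ω) (fun ω => g ω = b)))
    = ∑ i, v i * (pr (P i) (fun ω => f ω = a ∧ g ω = b) *
        Real.log (pr (P i) (fun ω => f ω = a ∧ g ω = b) /
          (pr (P i) (fun ω => f ω = a) * pr (P i) (fun ω => g ω = b)))) := by
    intro a b
    have hrm : pr (fun ω => ∑ i, v i * P i ω) (fun ω => g ω = b) = r b := by
      rw [pr_sum]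
      simp only [hmarg]
      rw [← Finset.sum_mul, hv1, one_mul]
    rw [hrm, pr_sum, pr_sum]
    rcases hdich a with ⟨i₀, h0⟩ | hall
    · -- hitting case
      have hy0 : ∀ i, i ≠ i₀ → pr (P i) (fun ω => f ω = a) = 0 := h0
      have hx0 : ∀ i, i ≠ i₀ → pr (P i) (fun ω => f ω = a ∧ g ω = b) = 0 := by
        intro i hi
        refine le_antisymm ?_ (pr_nonneg (hP i) _)
        rw [← hy0 i hi]
        exact pr_mono (hP i) fun ω h => h.1
      rw [Finset.sum_eq_single i₀ (fun i _ hi => by rw [hx0 i hi, mul_zero])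
        (fun h => absurd (Finset.mem_univ i₀) h)]
      rw [Finset.sum_eq_single i₀ (fun i _ hi => by rw [hy0 i hi, mul_zero])
        (fun h => absurd (Finset.mem_univ i₀) h)]
      rw [Finset.sum_eq_single i₀
        (fun i _ hi => by rw [hx0 i hi, zero_mul, mul_zero])
        (fun h => absurd (Finset.mem_univ i₀) h)]
      rw [hmarg i₀ b]
      by_cases hv0 : v i₀ = 0
      · simp [hv0]
      · rw [mul_assoc (v i₀) _ (r b),
          mul_div_mul_left _ _ hv0]
        ring
    · -- common case
      have j₀ : ι := Classical.arbitrary ι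
      have hx : ∀ i, pr (P i) (fun ω => f ω = a ∧ g ω = b)
          = pr (P j₀) (fun ω => f ω = a ∧ g ω = b) := fun i => (hall i j₀).1 b
      have hy : ∀ i, pr (P i) (fun ω => f ω = a)
          = pr (P j₀) (fun ω => f ω = a) := fun i => (hall i j₀).2
      have hxs : ∑ i, v i * pr (P i) (fun ω => f ω = a ∧ g ω = b)
          = pr (P j₀) (fun ω => f ω = a ∧ g ω = b) := by
        simp only [hx]; rw [← Finset.sum_mul, hv1, one_mul]
      have hys : ∑ i, v i * pr (P i) (fun ω => f ω = a)
          = pr (P j₀) (fun ω => f ω = a) := by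
        simp only [hy]; rw [← Finset.sum_mul, hv1, one_mul]
      rw [hxs, hys]
      have : ∀ i, v i * (pr (P i) (fun ω => f ω = a ∧ g ω = b) *
          Real.log (pr (P i) (fun ω => f ω = a ∧ g ω = b) /
            (pr (P i) (fun ω => f ω = a) * pr (P i) (fun ω => g ω = b))))
        = v i * (pr (P j₀) (fun ω => f ω = a ∧ g ω = b) *
          Real.log (pr (P j₀) (fun ω => f ω = a ∧ g ω = b) /
            (pr (P j₀) (fun ω => f ω = a) * r b))) := by
        intro i; rw [hx i, hy i, hmarg i b]
      rw [Finset.sum_congr rfl (fun i _ => this i), ← Finset.sum_mul, hv1,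
        one_mul]
  calc (∑ a, ∑ b, pr (fun ω => ∑ i, v i * P i ω) (fun ω => f ω = a ∧ g ω = b) *
        Real.log (pr (fun ω => ∑ i, v i * P i ω) (fun ω => f ω = a ∧ g ω = b) /
          (pr (fun ω => ∑ i, v i * P i ω) (fun ω => f ω = a) *
            pr (fun ω => ∑ i, v i * P i ω) (fun ω => g ω = b))))
      = ∑ a, ∑ b, ∑ i, v i * (pr (P i) (fun ω => f ω = a ∧ g ω = b) *
        Real.log (pr (P i) (fun ω => f ω = a ∧ g ω = b) /
          (pr (P i) (fun ω => f ω = a) * pr (P i) (fun ω => g ω = b)))) := by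
        exact Finset.sum_congr rfl fun a _ => Finset.sum_congr rfl fun b _ => key a b
    _ = ∑ i, v i * ∑ a, ∑ b, (pr (P i) (fun ω => f ω = a ∧ g ω = b) *
        Real.log (pr (P i) (fun ω => f ω = a ∧ g ω = b) /
          (pr (P i) (fun ω => f ω = a) * pr (P i) (fun ω => g ω = b)))) := by
        rw [Finset.sum_congr rfl fun a _ => Finset.sum_comm, Finset.sum_comm]
        refine Finset.sum_congr rfl fun i _ => ?_
        simp only [← Finset.mul_sum]
    _ = _ := rfl


/-! ### Telescoping sums over causal products -/

lemma hist_cons {W : Type} {n : ℕ} (w0 : W) (v : Fin n → W) (t : Fin n) :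
    hist (T := n + 1) (Fin.cons w0 v) t.succ = Fin.cons w0 (hist v t) := by
  funext i
  rcases i with ⟨iv, hi⟩
  cases iv with
  | zero => rfl
  | succ j => rfl

lemma histIncl_eq_snoc {A : Type} {n : ℕ} (f : Fin n → A) (t : Fin n) :
    histIncl f t = Fin.snoc (hist f t) (f t) := by
  funext i
  induction i using Fin.lastCases with
  | last =>
      rw [Fin.snoc_last]
      show f ⟨t.1, _⟩ = f t
      congr 1
  | cast j =>
      rw [Fin.snoc_castSucc]
      rfl

lemma telescope {W : Type} [Fintype W] :
    ∀ (n : ℕ) (k : (t : Fin n) → (Fin t.1 → W) → W → ℝ),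
      (∀ t p, ∑ w, k t p w = 1) →
      ∑ w : Fin n → W, ∏ t, k t (hist w t) (w t) = 1 := by
  intro n
  induction n with
  | zero =>
      intro k hk
      simp
  | succ n ih =>
      intro k hk
      rw [← Equiv.sum_comp (Fin.consEquiv (fun _ : Fin (n+1) => W))
        (fun w => ∏ t, k t (hist w t) (w t)), Fintype.sum_prod_type]
      have key : ∀ (w0 : W) (v : Fin n → W),
          (∏ t, k t (hist (Fin.consEquiv (fun _ : Fin (n+1) => W) (w0, v)) t)
            ((Fin.consEquiv (fun _ : Fin (n+1) => W) (w0, v)) t))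
          = k 0 (hist (T := n+1) (Fin.cons w0 v) 0) w0 *
            ∏ t : Fin n, (fun (t : Fin n) (p : Fin t.1 → W) (w : W) =>
              k t.succ (Fin.cons w0 p) w) t (hist v t) (v t) := by
        intro w0 v
        have hc : (Fin.consEquiv (fun _ : Fin (n+1) => W)) (w0, v) = Fin.cons w0 v := rfl
        rw [hc, Fin.prod_univ_succ]
        congr 1
        refine Finset.prod_congr rfl fun t _ => ?_
        rw [hist_cons, Fin.cons_succ]
      calc (∑ w0 : W, ∑ v : Fin n → W,
            ∏ t, k t (hist ((Fin.consEquiv (fun _ : Fin (n+1) => W)) (w0, v)) t)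
              (((Fin.consEquiv (fun _ : Fin (n+1) => W)) (w0, v)) t))
          = ∑ w0 : W, ∑ v : Fin n → W,
              k 0 (hist (T := n+1) (Fin.cons w0 v) 0) w0 *
              ∏ t : Fin n, (fun (t : Fin n) (p : Fin t.1 → W) (w : W) =>
                k t.succ (Fin.cons w0 p) w) t (hist v t) (v t) := by
            exact Finset.sum_congr rfl fun w0 _ =>
              Finset.sum_congr rfl fun v _ => key w0 v
        _ = 1 := by
            have hz : ∀ (w0 : W) (v : Fin n → W),
                hist (T := n+1) (Fin.cons w0 v) 0 = fun i : Fin 0 => i.elim0 := by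
              intro w0 v; funext i; exact i.elim0
            have : ∀ w0 : W, (∑ v : Fin n → W,
                k 0 (hist (T := n+1) (Fin.cons w0 v) 0) w0 *
                ∏ t : Fin n, (fun (t : Fin n) (p : Fin t.1 → W) (w : W) =>
                  k t.succ (Fin.cons w0 p) w) t (hist v t) (v t))
              = k 0 (fun i : Fin 0 => i.elim0) w0 := by
              intro w0
              have := ih (fun (t : Fin n) (p : Fin t.1 → W) (w : W) =>
                  k t.succ (Fin.cons w0 p) w) (fun t p => hk t.succ (Fin.cons w0 p))
              rw [Finset.sum_congr rfl fun v _ => by rw [hz w0 v], ← Finset.mul_sum,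
                this, mul_one]
            rw [Finset.sum_congr rfl fun w0 _ => this w0]; exact hk 0 _


/-! ### Basic facts about the joint pmf -/

lemma prob_le_one {α : Type} [Fintype α] {f : α → ℝ} (h0 : ∀ a, 0 ≤ f a)
    (h1 : ∑ a, f a = 1) (a : α) : f a ≤ 1 :=
  h1 ▸ Finset.single_le_sum (fun i _ => h0 i) (Finset.mem_univ a)

lemma joint_apply (K : Kernels X Y Z U) (πe : QPol T Z S U) (πc : CPol T S U)
    (ω : Traj T X Y Z S U) :
    joint K πe πc ω = ∏ t,
      K.PY (prevO (trY ω) t) (trY ω t) *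
      K.PX (prev3 (trX ω) (trY ω) (trU ω) t) (trX ω t) *
      K.PZ (trX ω t) (trZ ω t) *
      πe t (histIncl (trZ ω) t) (hist (trS ω) t) (hist (trU ω) t) (trS ω t) *
      πc t (histIncl (trS ω) t) (hist (trU ω) t) (trU ω t) := rfl

lemma joint_nonneg {K : Kernels X Y Z U} {πe : QPol T Z S U} {πc : CPol T S U}
    (hπe : IsQPol πe) (hπc : IsCPol πc) (ω : Traj T X Y Z S U) :
    0 ≤ joint K πe πc ω := by
  rw [joint_apply]
  refine Finset.prod_nonneg fun t _ => ?_
  exact mul_nonneg (mul_nonneg (mul_nonneg (mul_nonneg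
    (K.PY_nonneg _ _) (K.PX_nonneg _ _)) (K.PZ_nonneg _ _))
    (hπe.1 _ _ _ _ _)) (hπc.1 _ _ _ _)

lemma joint_le_one {K : Kernels X Y Z U} {πe : QPol T Z S U} {πc : CPol T S U}
    (hπe : IsQPol πe) (hπc : IsCPol πc) (ω : Traj T X Y Z S U) :
    joint K πe πc ω ≤ 1 := by
  rw [joint_apply]
  refine Finset.prod_le_one (fun t _ => ?_) (fun t _ => ?_)
  · exact mul_nonneg (mul_nonneg (mul_nonneg (mul_nonneg
      (K.PY_nonneg _ _) (K.PX_nonneg _ _)) (K.PZ_nonneg _ _))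
      (hπe.1 _ _ _ _ _)) (hπc.1 _ _ _ _)
  · have h1 := prob_le_one (K.PY_nonneg (prevO (trY ω) t)) (K.PY_sum _) (trY ω t)
    have h2 := prob_le_one (K.PX_nonneg (prev3 (trX ω) (trY ω) (trU ω) t)) (K.PX_sum _) (trX ω t)
    have h3 := prob_le_one (K.PZ_nonneg (trX ω t)) (K.PZ_sum _) (trZ ω t)
    have h4 := prob_le_one (hπe.1 t (histIncl (trZ ω) t) (hist (trS ω) t) (hist (trU ω) t))
      (hπe.2 t _ _ _) (trS ω t)
    have h5 := prob_le_one (hπc.1 t (histIncl (trS ω) t) (hist (trU ω) t))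
      (hπc.2 t _ _) (trU ω t)
    exact mul_le_one₀ (mul_le_one₀ (mul_le_one₀ (mul_le_one₀ h1
        (K.PX_nonneg _ _) h2) (K.PZ_nonneg _ _) h3) (hπe.1 _ _ _ _ _) h4)
      (hπc.1 _ _ _ _) h5

/-! ### The marginal of `Y` is policy-independent -/

/-- The (policy-independent) probability of a `Y`-trajectory. -/
def Yprob (K : Kernels X Y Z U) (y : Fin T → Y) : ℝ := ∏ t, K.PY (prevO y t) (y t)

@[reducible] def combine4 (x : Fin T → X) (z : Fin T → Z) (s : Fin T → S)
    (u : Fin T → U) : Fin T → X × Z × S × U := fun t => (x t, z t, s t, u t)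

def eqv4 : ((Fin T → X) × (Fin T → Z) × (Fin T → S) × (Fin T → U))
    ≃ (Fin T → X × Z × S × U) where
  toFun q := combine4 q.1 q.2.1 q.2.2.1 q.2.2.2
  invFun w := (fun t => (w t).1, fun t => (w t).2.1,
    fun t => (w t).2.2.1, fun t => (w t).2.2.2)
  left_inv q := rfl
  right_inv w := rfl

/-- Previous-step data for the collapsed process. -/
def pp3 (y : Fin T → Y) (t : Fin T) (p : Fin t.1 → X × Z × S × U) :
    Option (X × Y × U) :=
  if h : t.1 = 0 then none
  else some ((p ⟨t.1 - 1, by omega⟩).1,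
    y ⟨t.1 - 1, lt_of_le_of_lt (Nat.sub_le _ _) t.2⟩,
    (p ⟨t.1 - 1, by omega⟩).2.2.2)

/-- The one-stage kernel of the collapsed process `(X,Z,S,U)` given `y`. -/
def mker (K : Kernels X Y Z U) (πe : QPol T Z S U) (πc : CPol T S U)
    (y : Fin T → Y) (t : Fin T) (p : Fin t.1 → X × Z × S × U)
    (w : X × Z × S × U) : ℝ :=
  K.PX (pp3 y t p) w.1 *
  K.PZ w.1 w.2.1 *
  πe t (Fin.snoc (fun i => (p i).2.1) w.2.1) (fun i => (p i).2.2.1)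
    (fun i => (p i).2.2.2) w.2.2.1 *
  πc t (Fin.snoc (fun i => (p i).2.2.1) w.2.2.1) (fun i => (p i).2.2.2) w.2.2.2

lemma sum4_chain {α β γ δ : Type} [Fintype α] [Fintype β] [Fintype γ] [Fintype δ]
    (A : α → ℝ) (B : α → β → ℝ) (C : β → γ → ℝ) (D : γ → δ → ℝ)
    (hA : ∑ a, A a = 1) (hB : ∀ a, ∑ b, B a b = 1)
    (hC : ∀ b, ∑ c, C b c = 1) (hD : ∀ c, ∑ d, D c d = 1) :
    ∑ a, ∑ b, ∑ c, ∑ d, A a * B a b * C b c * D c d = 1 := by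
  have h4 : ∀ a b c, ∑ d, A a * B a b * C b c * D c d = A a * B a b * C b c := by
    intro a b c; rw [← Finset.mul_sum, hD, mul_one]
  have h3 : ∀ a b, ∑ c, A a * B a b * C b c = A a * B a b := by
    intro a b; rw [← Finset.mul_sum, hC, mul_one]
  have h2 : ∀ a, ∑ b, A a * B a b = A a := by
    intro a; rw [← Finset.mul_sum, hB, mul_one]
  calc ∑ a, ∑ b, ∑ c, ∑ d, A a * B a b * C b c * D c d
      = ∑ a, ∑ b, ∑ c, A a * B a b * C b c :=
        Finset.sum_congr rfl fun a _ => Finset.sum_congr rfl fun b _ =>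
          Finset.sum_congr rfl fun c _ => h4 a b c
    _ = ∑ a, ∑ b, A a * B a b :=
        Finset.sum_congr rfl fun a _ => Finset.sum_congr rfl fun b _ => h3 a b
    _ = ∑ a, A a := Finset.sum_congr rfl fun a _ => h2 a
    _ = 1 := hA

lemma mker_sum {K : Kernels X Y Z U} {πe : QPol T Z S U} {πc : CPol T S U}
    (hπe : IsQPol πe) (hπc : IsCPol πc) (y : Fin T → Y) (t : Fin T)
    (p : Fin t.1 → X × Z × S × U) : ∑ w, mker K πe πc y t p w = 1 := by
  simp only [Fintype.sum_prod_type]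
  exact sum4_chain (fun x => K.PX (pp3 y t p) x)
    (fun x z => K.PZ x z)
    (fun z s => πe t (Fin.snoc (fun i => (p i).2.1) z) (fun i => (p i).2.2.1)
      (fun i => (p i).2.2.2) s)
    (fun s u => πc t (Fin.snoc (fun i => (p i).2.2.1) s) (fun i => (p i).2.2.2) u)
    (K.PX_sum _) (fun x => K.PZ_sum x) (fun z => hπe.2 _ _ _ _) (fun s => hπc.2 _ _ _)

lemma pp3_hist (y : Fin T → Y) (w : Fin T → X × Z × S × U) (t : Fin T) :
    pp3 y t (hist w t)
      = prev3 (fun t' => (w t').1) y (fun t' => (w t').2.2.2) t := by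
  unfold pp3 prev3
  by_cases h : t.1 = 0
  · rw [dif_pos h, if_pos h]
  · rw [dif_neg h, if_neg h]
    rfl

lemma joint_y_split (K : Kernels X Y Z U) (πe : QPol T Z S U) (πc : CPol T S U)
    (x : Fin T → X) (y : Fin T → Y) (z : Fin T → Z) (s : Fin T → S) (u : Fin T → U) :
    joint K πe πc (x, y, z, s, u)
      = Yprob K y * ∏ t, mker K πe πc y t (hist (combine4 x z s u) t)
          (combine4 x z s u t) := by
  rw [joint_apply, Yprob, ← Finset.prod_mul_distrib]
  simp only [trX, trY, trZ, trS, trU]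
  refine Finset.prod_congr rfl fun t _ => ?_
  have hpp : pp3 y t (hist (combine4 x z s u) t) = prev3 x y u t :=
    pp3_hist y (combine4 x z s u) t
  have e1 : mker K πe πc y t (hist (combine4 x z s u) t) (combine4 x z s u t)
      = K.PX (prev3 x y u t) (x t) * K.PZ (x t) (z t) *
        πe t (Fin.snoc (hist z t) (z t)) (hist s t) (hist u t) (s t) *
        πc t (Fin.snoc (hist s t) (s t)) (hist u t) (u t) := by
    show K.PX (pp3 y t (hist (combine4 x z s u) t)) (x t) * K.PZ (x t) (z t) *
        πe t (Fin.snoc (hist z t) (z t)) (hist s t) (hist u t) (s t) *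
        πc t (Fin.snoc (hist s t) (s t)) (hist u t) (u t) = _
    rw [hpp]
  rw [e1, histIncl_eq_snoc z t, histIncl_eq_snoc s t]
  ring

lemma marg_Y (K : Kernels X Y Z U) {πe : QPol T Z S U} {πc : CPol T S U}
    (hπe : IsQPol πe) (hπc : IsCPol πc) (y : Fin T → Y) :
    pr (joint K πe πc) (fun ω => trY ω = y) = Yprob K y := by
  have e0 : pr (joint K πe πc) (fun ω => trY ω = y)
      = ∑ x : Fin T → X, ∑ y' : Fin T → Y, ∑ z : Fin T → Z, ∑ s : Fin T → S,
          ∑ u : Fin T → U,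
          if y' = y then joint K πe πc (x, y', z, s, u) else 0 := by
    rw [pr, Fintype.sum_prod_type]
    refine Finset.sum_congr rfl fun x _ => ?_
    rw [Fintype.sum_prod_type]
    refine Finset.sum_congr rfl fun y' _ => ?_
    rw [Fintype.sum_prod_type]
    refine Finset.sum_congr rfl fun z _ => ?_
    rw [Fintype.sum_prod_type]
    refine Finset.sum_congr rfl fun s _ => ?_
    refine Finset.sum_congr rfl fun u _ => ?_
    by_cases h : y' = y
    · rw [if_pos (show trY (x, y', z, s, u) = y from h), if_pos h]
    · rw [if_neg (show ¬ trY (x, y', z, s, u) = y from h), if_neg h]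
  rw [e0]
  have h1 : ∀ x : Fin T → X, ∀ y' : Fin T → Y,
      (∑ z : Fin T → Z, ∑ s : Fin T → S, ∑ u : Fin T → U,
        if y' = y then joint K πe πc (x, y', z, s, u) else 0)
      = if y' = y then (∑ z : Fin T → Z, ∑ s : Fin T → S, ∑ u : Fin T → U,
          joint K πe πc (x, y', z, s, u)) else 0 := by
    intro x y'
    by_cases h : y' = y <;> simp [h]
  have h2 : ∀ x : Fin T → X,
      (∑ y' : Fin T → Y, if y' = y then (∑ z : Fin T → Z, ∑ s : Fin T → S,
        ∑ u : Fin T → U, joint K πe πc (x, y', z, s, u)) else 0)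
      = ∑ z : Fin T → Z, ∑ s : Fin T → S, ∑ u : Fin T → U,
          joint K πe πc (x, y, z, s, u) := by
    intro x
    rw [Finset.sum_ite_eq' Finset.univ y]
    simp
  have h3 : ∀ (x : Fin T → X) (z : Fin T → Z) (s : Fin T → S) (u : Fin T → U),
      joint K πe πc (x, y, z, s, u)
        = Yprob K y * ∏ t, mker K πe πc y t (hist (combine4 x z s u) t)
            (combine4 x z s u t) := fun x z s u => joint_y_split K πe πc x y z s u
  rw [Finset.sum_congr rfl fun x (_ : x ∈ Finset.univ) =>
    Finset.sum_congr rfl fun y' (_ : y' ∈ Finset.univ) => h1 x y']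
  rw [Finset.sum_congr rfl fun x (_ : x ∈ Finset.univ) => h2 x]
  rw [Finset.sum_congr rfl fun x (_ : x ∈ Finset.univ) =>
    Finset.sum_congr rfl fun z (_ : z ∈ Finset.univ) =>
    Finset.sum_congr rfl fun s (_ : s ∈ Finset.univ) =>
    Finset.sum_congr rfl fun u (_ : u ∈ Finset.univ) => h3 x z s u]
  simp only [← Finset.mul_sum]
  have pack : (∑ q : (Fin T → X) × (Fin T → Z) × (Fin T → S) × (Fin T → U),
      ∏ t, mker K πe πc y t (hist (combine4 q.1 q.2.1 q.2.2.1 q.2.2.2) t)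
        (combine4 q.1 q.2.1 q.2.2.1 q.2.2.2 t))
      = ∑ x : Fin T → X, ∑ z : Fin T → Z, ∑ s : Fin T → S, ∑ u : Fin T → U,
          ∏ t, mker K πe πc y t (hist (combine4 x z s u) t) (combine4 x z s u t) := by
    simp only [Fintype.sum_prod_type]
  rw [← pack,
    Fintype.sum_equiv eqv4
      (fun q => ∏ t, mker K πe πc y t (hist (combine4 q.1 q.2.1 q.2.2.1 q.2.2.2) t)
        (combine4 q.1 q.2.1 q.2.2.1 q.2.2.2 t))
      (fun w => ∏ t, mker K πe πc y t (hist w t) (w t)) (fun q => rfl),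
    telescope T (mker K πe πc y) (fun t p => mker_sum hπe hπc y t p), mul_one]


/-! ### Purification of the controller -/

abbrev Block (T : ℕ) (S U : Type) : Type :=
  Σ t : Fin T, (Fin (t.1 + 1) → S) × (Fin t.1 → U)

/-- Replace the controller's conditional pmf at one block by a point mass at `u₀`. -/
def upd (πc : CPol T S U) (b : Block T S U) (u₀ : U) : CPol T S U :=
  fun t ss us ut =>
    if (⟨t, ss, us⟩ : Block T S U) = b then (if ut = u₀ then 1 else 0)
    else πc t ss us ut

lemma upd_isCPol {πc : CPol T S U} (hπc : IsCPol πc) (b : Block T S U) (u₀ : U) :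
    IsCPol (upd πc b u₀) := by
  constructor
  · intro t ss us ut
    simp only [upd]
    split
    · split <;> norm_num
    · exact hπc.1 _ _ _ _
  · intro t ss us
    by_cases hc : (⟨t, ss, us⟩ : Block T S U) = b
    · simp only [upd, if_pos hc]
      rw [Finset.sum_ite_eq' Finset.univ u₀ (fun _ => (1 : ℝ))]
      simp
    · simp only [upd, if_neg hc]
      exact hπc.2 _ _ _

lemma upd_at (πc : CPol T S U) (b : Block T S U) (u₀ ut : U) :
    upd πc b u₀ b.1 b.2.1 b.2.2 ut = if ut = u₀ then 1 else 0 := by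
  simp only [upd]
  simp

lemma upd_ne (πc : CPol T S U) {b b' : Block T S U} (hbb : b' ≠ b) (u₀ ut : U) :
    upd πc b u₀ b'.1 b'.2.1 b'.2.2 ut = πc b'.1 b'.2.1 b'.2.2 ut := by
  simp only [upd]
  exact if_neg fun h => hbb h

lemma mix_assemble {v : U → ℝ} {cc : ℝ} (E Q : ℝ) (c' : U → ℝ)
    (hsum : ∑ u₀, v u₀ * c' u₀ = cc) :
    ∑ u₀, v u₀ * (E * c' u₀ * Q) = E * cc * Q := by
  calc ∑ u₀, v u₀ * (E * c' u₀ * Q) = ∑ u₀, E * (v u₀ * c' u₀) * Q :=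
        Finset.sum_congr rfl fun u₀ _ => by ring
    _ = E * (∑ u₀, v u₀ * c' u₀) * Q := by rw [← Finset.sum_mul, ← Finset.mul_sum]
    _ = E * cc * Q := by rw [hsum]

lemma joint_decomp {K : Kernels X Y Z U} {πe : QPol T Z S U} {πc : CPol T S U}
    (hπc : IsCPol πc) (b : Block T S U) (ω : Traj T X Y Z S U) :
    joint K πe πc ω
      = ∑ u₀, πc b.1 b.2.1 b.2.2 u₀ * joint K πe (upd πc b u₀) ω := by
  obtain ⟨t₀, ss₀, us₀⟩ := b
  have hfac : ∀ π' : CPol T S U, joint K πe π' ω =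
      (K.PY (prevO (trY ω) t₀) (trY ω t₀) *
        K.PX (prev3 (trX ω) (trY ω) (trU ω) t₀) (trX ω t₀) *
        K.PZ (trX ω t₀) (trZ ω t₀) *
        πe t₀ (histIncl (trZ ω) t₀) (hist (trS ω) t₀) (hist (trU ω) t₀) (trS ω t₀)) *
      π' t₀ (histIncl (trS ω) t₀) (hist (trU ω) t₀) (trU ω t₀) *
      ∏ t ∈ Finset.univ.erase t₀,
        (K.PY (prevO (trY ω) t) (trY ω t) *
          K.PX (prev3 (trX ω) (trY ω) (trU ω) t) (trX ω t) *
          K.PZ (trX ω t) (trZ ω t) *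
          πe t (histIncl (trZ ω) t) (hist (trS ω) t) (hist (trU ω) t) (trS ω t) *
          π' t (histIncl (trS ω) t) (hist (trU ω) t) (trU ω t)) := by
    intro π'
    rw [joint_apply, ← Finset.mul_prod_erase Finset.univ _ (Finset.mem_univ t₀)]
  have herase : ∀ u₀ : U,
      (∏ t ∈ Finset.univ.erase t₀,
        (K.PY (prevO (trY ω) t) (trY ω t) *
          K.PX (prev3 (trX ω) (trY ω) (trU ω) t) (trX ω t) *
          K.PZ (trX ω t) (trZ ω t) *
          πe t (histIncl (trZ ω) t) (hist (trS ω) t) (hist (trU ω) t) (trS ω t) *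
          upd πc ⟨t₀, ss₀, us₀⟩ u₀ t (histIncl (trS ω) t) (hist (trU ω) t) (trU ω t)))
      = ∏ t ∈ Finset.univ.erase t₀,
        (K.PY (prevO (trY ω) t) (trY ω t) *
          K.PX (prev3 (trX ω) (trY ω) (trU ω) t) (trX ω t) *
          K.PZ (trX ω t) (trZ ω t) *
          πe t (histIncl (trZ ω) t) (hist (trS ω) t) (hist (trU ω) t) (trS ω t) *
          πc t (histIncl (trS ω) t) (hist (trU ω) t) (trU ω t)) := by
    intro u₀
    refine Finset.prod_congr rfl fun t ht => ?_
    have htne : t ≠ t₀ := (Finset.mem_erase.mp ht).1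
    have hbb : (⟨t, histIncl (trS ω) t, hist (trU ω) t⟩ : Block T S U)
        ≠ ⟨t₀, ss₀, us₀⟩ := fun h => htne (congrArg Sigma.fst h)
    exact congrArg (· * upd πc ⟨t₀, ss₀, us₀⟩ u₀ t (histIncl (trS ω) t) (hist (trU ω) t) (trU ω t) ) rfl |>.trans (congrArg _ (upd_ne πc (b' := (⟨t, histIncl (trS ω) t, hist (trU ω) t⟩ : Block T S U)) hbb u₀ (trU ω t)))
  have hsum : ∑ u₀, πc t₀ ss₀ us₀ u₀ *
      upd πc ⟨t₀, ss₀, us₀⟩ u₀ t₀ (histIncl (trS ω) t₀) (hist (trU ω) t₀) (trU ω t₀)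
      = πc t₀ (histIncl (trS ω) t₀) (hist (trU ω) t₀) (trU ω t₀) := by
    by_cases hm : (⟨t₀, histIncl (trS ω) t₀, hist (trU ω) t₀⟩ : Block T S U)
        = ⟨t₀, ss₀, us₀⟩
    · have hv : ∀ u₀, upd πc ⟨t₀, ss₀, us₀⟩ u₀ t₀ (histIncl (trS ω) t₀)
          (hist (trU ω) t₀) (trU ω t₀) = if trU ω t₀ = u₀ then 1 else 0 := by
        intro u₀; simp only [upd]; rw [if_pos hm]
      have hpair : (histIncl (trS ω) t₀, hist (trU ω) t₀) = (ss₀, us₀) :=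
        eq_of_heq (Sigma.mk.inj_iff.mp hm).2
      have hss : histIncl (trS ω) t₀ = ss₀ := congrArg Prod.fst hpair
      have hus : hist (trU ω) t₀ = us₀ := congrArg Prod.snd hpair
      simp only [hv, mul_ite, mul_one, mul_zero]
      rw [Finset.sum_ite_eq Finset.univ (trU ω t₀) (fun u₀ => πc t₀ ss₀ us₀ u₀)]
      rw [← hss, ← hus]
      simp
    · have hv : ∀ u₀, upd πc ⟨t₀, ss₀, us₀⟩ u₀ t₀ (histIncl (trS ω) t₀)
          (hist (trU ω) t₀) (trU ω t₀)
          = πc t₀ (histIncl (trS ω) t₀) (hist (trU ω) t₀) (trU ω t₀) := by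
        intro u₀; simp only [upd]; rw [if_neg hm]
      simp only [hv]
      rw [← Finset.sum_mul, hπc.2, one_mul]
  rw [hfac πc,
    Finset.sum_congr rfl fun u₀ (_ : u₀ ∈ Finset.univ) => by
      rw [hfac (upd πc ⟨t₀, ss₀, us₀⟩ u₀), herase u₀],
    mix_assemble _ _ _ hsum]


lemma expCost_mix {K : Kernels X Y Z U} {πe : QPol T Z S U} {πc : CPol T S U}
    (hπc : IsCPol πc) (b : Block T S U) (c : X × U → ℝ) :
    expCost K πe πc c
      = ∑ u₀, πc b.1 b.2.1 b.2.2 u₀ * expCost K πe (upd πc b u₀) c := by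
  unfold expCost
  rw [Finset.sum_congr rfl fun t (_ : t ∈ Finset.univ) =>
    Finset.sum_congr rfl fun ω (_ : ω ∈ Finset.univ) => by
      rw [joint_decomp hπc b ω, Finset.sum_mul]]
  rw [Finset.sum_congr rfl fun t (_ : t ∈ Finset.univ) => Finset.sum_comm,
    Finset.sum_comm]
  refine Finset.sum_congr rfl fun u₀ _ => ?_
  simp only [mul_assoc, ← Finset.mul_sum]

lemma objective_mix [Nonempty U] {K : Kernels X Y Z U} {πe : QPol T Z S U}
    {πc : CPol T S U} (hπe : IsQPol πe) (hπc : IsCPol πc) (b : Block T S U)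
    (c : X × U → ℝ) (lam : ℝ) :
    objective K c lam πe πc
      = ∑ u₀, πc b.1 b.2.1 b.2.2 u₀ * objective K c lam πe (upd πc b u₀) := by
  obtain ⟨t₀, ss₀, us₀⟩ := b
  have hdich : ∀ a : (Fin T → S) × (Fin T → U),
      (∃ i₀, ∀ i, i ≠ i₀ →
        pr (joint K πe (upd πc ⟨t₀, ss₀, us₀⟩ i))
          (fun ω => (fun ω => (trS ω, trU ω)) ω = a) = 0) ∨
      (∀ i j, (∀ y, pr (joint K πe (upd πc ⟨t₀, ss₀, us₀⟩ i))
            (fun ω => (fun ω => (trS ω, trU ω)) ω = a ∧ (fun ω => trY ω) ω = y)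
          = pr (joint K πe (upd πc ⟨t₀, ss₀, us₀⟩ j))
            (fun ω => (fun ω => (trS ω, trU ω)) ω = a ∧ (fun ω => trY ω) ω = y)) ∧
        pr (joint K πe (upd πc ⟨t₀, ss₀, us₀⟩ i))
            (fun ω => (fun ω => (trS ω, trU ω)) ω = a)
          = pr (joint K πe (upd πc ⟨t₀, ss₀, us₀⟩ j))
            (fun ω => (fun ω => (trS ω, trU ω)) ω = a)) := by
    intro a
    by_cases hm : (⟨t₀, histIncl a.1 t₀, hist a.2 t₀⟩ : Block T S U) = ⟨t₀, ss₀, us₀⟩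
    · left
      refine ⟨a.2 t₀, fun i hi => ?_⟩
      refine pr_eq_zero fun ω hω => ?_
      have hS : trS ω = a.1 := congrArg Prod.fst hω
      have hU : trU ω = a.2 := congrArg Prod.snd hω
      rw [joint_apply]
      refine Finset.prod_eq_zero (Finset.mem_univ t₀) ?_
      have hcond : (⟨t₀, histIncl (trS ω) t₀, hist (trU ω) t₀⟩ : Block T S U)
          = ⟨t₀, ss₀, us₀⟩ := by rw [hS, hU]; exact hm
      have hfac : upd πc ⟨t₀, ss₀, us₀⟩ i t₀ (histIncl (trS ω) t₀)
          (hist (trU ω) t₀) (trU ω t₀) = 0 := by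
        simp only [upd]
        rw [if_pos hcond, if_neg ?_]
        intro h
        exact hi (by rw [← h, hU])
      rw [hfac, mul_zero]
    · right
      intro i j
      have hagree : ∀ ω : Traj T X Y Z S U, (trS ω, trU ω) = a →
          joint K πe (upd πc ⟨t₀, ss₀, us₀⟩ i) ω
            = joint K πe (upd πc ⟨t₀, ss₀, us₀⟩ j) ω := by
        intro ω hω
        have hS : trS ω = a.1 := congrArg Prod.fst hω
        have hU : trU ω = a.2 := congrArg Prod.snd hω
        rw [joint_apply, joint_apply]
        refine Finset.prod_congr rfl fun t _ => ?_
        have hcond : (⟨t, histIncl (trS ω) t, hist (trU ω) t⟩ : Block T S U)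
            ≠ ⟨t₀, ss₀, us₀⟩ := by
          intro h
          rw [hS, hU] at h
          have ht : t = t₀ := congrArg Sigma.fst h
          subst ht
          exact hm h
        have h1 : ∀ u₀ ut, upd πc ⟨t₀, ss₀, us₀⟩ u₀ t (histIncl (trS ω) t)
            (hist (trU ω) t) ut = πc t (histIncl (trS ω) t) (hist (trU ω) t) ut := by
          intro u₀ ut
          simp only [upd]
          rw [if_neg hcond]
        rw [h1, h1]
      exact ⟨fun y => pr_congr (fun ω => Iff.rfl) (fun ω hω => hagree ω hω.1),
        pr_congr (fun ω => Iff.rfl) hagree⟩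
  have hMIeq : MI (joint K πe πc) (fun ω => (trS ω, trU ω)) (fun ω => trY ω)
      = ∑ u₀, πc t₀ ss₀ us₀ u₀ *
          MI (joint K πe (upd πc ⟨t₀, ss₀, us₀⟩ u₀))
            (fun ω => (trS ω, trU ω)) (fun ω => trY ω) := by
    have hpt : joint K πe πc = fun ω => ∑ u₀, πc t₀ ss₀ us₀ u₀ *
        joint K πe (upd πc ⟨t₀, ss₀, us₀⟩ u₀) ω :=
      funext (joint_decomp hπc ⟨t₀, ss₀, us₀⟩)
    rw [hpt]
    exact MI_mix _ _ _ _ (fun y => Yprob K y)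
      (fun u₀ ω => joint_nonneg hπe (upd_isCPol hπc _ u₀) ω)
      (hπc.1 t₀ ss₀ us₀) (hπc.2 t₀ ss₀ us₀)
      (fun u₀ y => marg_Y K hπe (upd_isCPol hπc _ u₀) y) hdich
  unfold objective
  rw [expCost_mix hπc ⟨t₀, ss₀, us₀⟩ c, hMIeq, Finset.mul_sum,
    ← Finset.sum_add_distrib]
  refine Finset.sum_congr rfl fun u₀ _ => by ring

lemma step_lemma [Nonempty U] {K : Kernels X Y Z U} {πe : QPol T Z S U}
    {πc : CPol T S U} (hπe : IsQPol πe) (hπc : IsCPol πc) (b : Block T S U)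
    (c : X × U → ℝ) (lam : ℝ) :
    ∃ u₀, objective K c lam πe (upd πc b u₀) ≤ objective K c lam πe πc := by
  obtain ⟨u₀, -, hmin⟩ := Finset.exists_min_image Finset.univ
    (fun u => objective K c lam πe (upd πc b u))
    ⟨Classical.arbitrary U, Finset.mem_univ _⟩
  refine ⟨u₀, ?_⟩
  rw [objective_mix hπe hπc b c lam]
  calc objective K c lam πe (upd πc b u₀)
      = ∑ u, πc b.1 b.2.1 b.2.2 u * objective K c lam πe (upd πc b u₀) := by
        rw [← Finset.sum_mul, hπc.2, one_mul]
    _ ≤ ∑ u, πc b.1 b.2.1 b.2.2 u * objective K c lam πe (upd πc b u) :=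
        Finset.sum_le_sum fun u _ =>
          mul_le_mul_of_nonneg_left (hmin u (Finset.mem_univ u)) (hπc.1 _ _ _ u)


/-! ### Purification by induction on the number of impure blocks -/

def Pure (πc : CPol T S U) (b : Block T S U) : Prop :=
  ∃ u₀, ∀ ut, πc b.1 b.2.1 b.2.2 ut = if ut = u₀ then 1 else 0

def impure (πc : CPol T S U) : Finset (Block T S U) :=
  Finset.univ.filter fun b => ¬ Pure πc b

lemma isDet_of_impure_empty {πc : CPol T S U} (h : impure πc = ∅) : IsDet πc := by
  have hp : ∀ t ss us, ∃ u₀, ∀ ut, πc t ss us ut = if ut = u₀ then 1 else 0 := by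
    intro t ss us
    have hb : (⟨t, ss, us⟩ : Block T S U) ∉ impure πc := by
      rw [h]; exact Finset.notMem_empty _
    by_contra hno
    exact hb (Finset.mem_filter.mpr ⟨Finset.mem_univ _, hno⟩)
  exact ⟨fun t ss us => Classical.choose (hp t ss us),
    fun t ss us ut => (Classical.choose_spec (hp t ss us)) ut⟩

lemma pure_upd (πc : CPol T S U) (b : Block T S U) (u₀ : U) : Pure (upd πc b u₀) b :=
  ⟨u₀, fun ut => upd_at πc b u₀ ut⟩

lemma impure_upd_subset (πc : CPol T S U) (b : Block T S U) (u₀ : U) :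
    impure (upd πc b u₀) ⊆ (impure πc).erase b := by
  intro b' hb'
  have hb'2 : ¬ Pure (upd πc b u₀) b' := (Finset.mem_filter.mp hb').2
  have hne : b' ≠ b := by
    intro h
    rw [h] at hb'2
    exact hb'2 (pure_upd πc b u₀)
  refine Finset.mem_erase.mpr ⟨hne, Finset.mem_filter.mpr ⟨Finset.mem_univ _, ?_⟩⟩
  rintro ⟨u₁, hu₁⟩
  exact hb'2 ⟨u₁, fun ut => by rw [upd_ne πc hne u₀ ut]; exact hu₁ ut⟩

lemma purify [Nonempty U] {K : Kernels X Y Z U} {πe : QPol T Z S U}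
    (hπe : IsQPol πe) (c : X × U → ℝ) (lam : ℝ) :
    ∀ (n : ℕ) (πc : CPol T S U), IsCPol πc → (impure πc).card ≤ n →
      ∃ πc', IsCPol πc' ∧ IsDet πc' ∧
        objective K c lam πe πc' ≤ objective K c lam πe πc := by
  intro n
  induction n with
  | zero =>
      intro πc hπc hcard
      have h0 : impure πc = ∅ := Finset.card_eq_zero.mp (Nat.le_zero.mp hcard)
      exact ⟨πc, hπc, isDet_of_impure_empty h0, le_refl _⟩
  | succ n ih =>
      intro πc hπc hcard
      by_cases hemp : impure πc = ∅
      · exact ⟨πc, hπc, isDet_of_impure_empty hemp, le_refl _⟩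
      · obtain ⟨b, hb⟩ := Finset.nonempty_of_ne_empty hemp
        obtain ⟨u₀, hu₀⟩ := step_lemma (K := K) hπe hπc b c lam
        have hcard' : (impure (upd πc b u₀)).card ≤ n := by
          have h1 := Finset.card_le_card (impure_upd_subset πc b u₀)
          have h2 := Finset.card_erase_of_mem hb
          have h3 := Finset.card_pos.mpr ⟨b, hb⟩
          omega
        obtain ⟨πc', h1, h2, h3⟩ := ih (upd πc b u₀) (upd_isCPol hπc b u₀) hcard'
        exact ⟨πc', h1, h2, h3.trans hu₀⟩

/-! ### Crude lower bounds making the objective bounded below -/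

lemma neg_one_le_mul_log {x : ℝ} (hx : 0 < x) : -1 ≤ x * Real.log x := by
  have h := Real.log_le_sub_one_of_pos (show (0:ℝ) < x⁻¹ from inv_pos.mpr hx)
  rw [Real.log_inv] at h
  have h2 := mul_le_mul_of_nonneg_left h hx.le
  have h3 : x * x⁻¹ = 1 := mul_inv_cancel₀ (ne_of_gt hx)
  nlinarith

lemma mul_log_le {p q M : ℝ} (hp0 : 0 ≤ p) (hpM : p ≤ M) (hq : 0 < q)
    (hqM : q ≤ M) (hM : 1 ≤ M) : p * Real.log q ≤ M * Real.log M := by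
  have hMpos : (0:ℝ) < M := lt_of_lt_of_le zero_lt_one hM
  have hlq : Real.log q ≤ Real.log M := (Real.log_le_log_iff hq hMpos).mpr hqM
  have hlM : 0 ≤ Real.log M := Real.log_nonneg hM
  by_cases hs : Real.log q ≤ 0
  · nlinarith
  · push_neg at hs
    nlinarith [mul_le_mul hpM hlq (le_of_lt hs) (le_trans hp0 hpM)]

lemma summand_lb {p q r M : ℝ} (hM : 1 ≤ M) (hp : 0 ≤ p) (hpq : p ≤ q)
    (hpr : p ≤ r) (hqM : q ≤ M) (hrM : r ≤ M) :
    -(1 + 2 * M * Real.log M) ≤ p * Real.log (p / (q * r)) := by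
  have hlM : 0 ≤ Real.log M := Real.log_nonneg hM
  rcases eq_or_lt_of_le hp with h | hp
  · rw [← h]
    nlinarith
  · have hq : 0 < q := lt_of_lt_of_le hp hpq
    have hr : 0 < r := lt_of_lt_of_le hp hpr
    rw [Real.log_div (ne_of_gt hp) (ne_of_gt (mul_pos hq hr)),
      Real.log_mul (ne_of_gt hq) (ne_of_gt hr)]
    have h1 := neg_one_le_mul_log hp
    have h2 := mul_log_le (le_of_lt hp) (le_trans hpq hqM) hq hqM hM
    have h3 := mul_log_le (le_of_lt hp) (le_trans hpr hrM) hr hrM hM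
    nlinarith

lemma MI_lb {Ω A B : Type} [Fintype Ω] [Fintype A] [Fintype B] [Nonempty Ω]
    {P : Ω → ℝ} (f : Ω → A) (g : Ω → B)
    (h0 : ∀ ω, 0 ≤ P ω) (h1 : ∀ ω, P ω ≤ 1) :
    -((Fintype.card A : ℝ) * (Fintype.card B : ℝ) *
        (1 + 2 * (Fintype.card Ω : ℝ) * Real.log (Fintype.card Ω)))
      ≤ MI P f g := by
  have hM : (1:ℝ) ≤ (Fintype.card Ω : ℝ) := by
    exact_mod_cast Nat.one_le_iff_ne_zero.mpr (Fintype.card_ne_zero (α := Ω))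
  have hbd : ∀ (a : A) (b : B),
      -(1 + 2 * (Fintype.card Ω : ℝ) * Real.log (Fintype.card Ω))
        ≤ pr P (fun ω => f ω = a ∧ g ω = b) *
            Real.log (pr P (fun ω => f ω = a ∧ g ω = b) /
              (pr P (fun ω => f ω = a) * pr P (fun ω => g ω = b))) := by
    intro a b
    exact summand_lb hM (pr_nonneg h0 _)
      (pr_mono h0 fun ω h => h.1) (pr_mono h0 fun ω h => h.2)
      (pr_le_card h1 h0 _) (pr_le_card h1 h0 _)
  have hsum : (∑ _a : A, ∑ _b : B,
      -(1 + 2 * (Fintype.card Ω : ℝ) * Real.log (Fintype.card Ω)))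
      = -((Fintype.card A : ℝ) * (Fintype.card B : ℝ) *
        (1 + 2 * (Fintype.card Ω : ℝ) * Real.log (Fintype.card Ω))) := by
    rw [Finset.sum_const, Finset.sum_const, Finset.card_univ, Finset.card_univ,
      nsmul_eq_mul, nsmul_eq_mul]
    ring
  rw [MI, ← hsum]
  exact Finset.sum_le_sum fun a _ => Finset.sum_le_sum fun b _ => hbd a b

lemma expCost_lb {K : Kernels X Y Z U} {πe : QPol T Z S U} {πc : CPol T S U}
    (hπe : IsQPol πe) (hπc : IsCPol πc) (c : X × U → ℝ) :
    -((T : ℝ) * (Fintype.card (Traj T X Y Z S U) : ℝ) * ∑ p, |c p|)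
      ≤ expCost K πe πc c := by
  have hC0 : 0 ≤ ∑ p, |c p| := Finset.sum_nonneg fun p _ => abs_nonneg _
  have key : ∀ (t : Fin T) (ω : Traj T X Y Z S U),
      -(∑ p, |c p|) ≤ joint K πe πc ω * c (trX ω t, trU ω t) := by
    intro t ω
    have h1 : |c (trX ω t, trU ω t)| ≤ ∑ p, |c p| :=
      Finset.single_le_sum (fun p _ => abs_nonneg (c p)) (Finset.mem_univ _)
    have h2 := joint_nonneg (K := K) hπe hπc ω
    have h3 := joint_le_one (K := K) hπe hπc ω
    have h4 : -(∑ p, |c p|) ≤ c (trX ω t, trU ω t) :=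
      le_trans (neg_le_neg h1) (neg_abs_le _)
    nlinarith
  have hsum : (∑ _t : Fin T, ∑ _ω : Traj T X Y Z S U, -(∑ p, |c p|))
      = -((T : ℝ) * (Fintype.card (Traj T X Y Z S U) : ℝ) * ∑ p, |c p|) := by
    rw [Finset.sum_const, Finset.sum_const, Finset.card_univ, Finset.card_univ,
      nsmul_eq_mul, nsmul_eq_mul, Fintype.card_fin]
    ring
  rw [expCost, ← hsum]
  exact Finset.sum_le_sum fun t _ => Finset.sum_le_sum fun ω _ => key t ω


/-! ### Canonical witness policies -/

def unifQ (T : ℕ) (Z S U : Type) [Fintype S] : QPol T Z S U :=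
  fun _ _ _ _ _ => (Fintype.card S : ℝ)⁻¹

def detC (T : ℕ) (S U : Type) [Nonempty U] : CPol T S U :=
  fun _ _ _ ut => if ut = Classical.arbitrary U then 1 else 0

lemma unifQ_isQPol [Nonempty S] : IsQPol (unifQ T Z S U) := by
  constructor
  · intro t zs ss us st
    unfold unifQ
    positivity
  · intro t zs ss us
    unfold unifQ
    rw [Finset.sum_const, Finset.card_univ, nsmul_eq_mul,
      mul_inv_cancel₀ (show (Fintype.card S : ℝ) ≠ 0 by
        exact_mod_cast Fintype.card_ne_zero)]

lemma detC_isCPol [Nonempty U] : IsCPol (detC T S U) := by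
  constructor
  · intro t ss us ut
    unfold detC
    split <;> norm_num
  · intro t ss us
    unfold detC
    rw [Finset.sum_ite_eq' Finset.univ (Classical.arbitrary U) (fun _ => (1 : ℝ))]
    simp

lemma detC_isDet [Nonempty U] : IsDet (detC T S U) :=
  ⟨fun _ _ _ => Classical.arbitrary U, fun _ _ _ _ => rfl⟩

/-- Restricting the controller to deterministic functions incurs
no loss of optimality: the infimum of the privacy-aware objective over all
stochastic policy pairs equals the infimum over pairs whose controller is
deterministic. -/
theorem deterministic_controller_no_loss_of_optimality
    [Nonempty X] [Nonempty Y] [Nonempty Z] [Nonempty S] [Nonempty U]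
    (hT : 1 ≤ T) (K : Kernels X Y Z U) (c : X × U → ℝ) (lam : ℝ) (hlam : 0 ≤ lam) :
    sInf {r : ℝ | ∃ πe : QPol T Z S U, ∃ πc : CPol T S U,
        IsQPol πe ∧ IsCPol πc ∧ r = objective K c lam πe πc} =
    sInf {r : ℝ | ∃ πe : QPol T Z S U, ∃ πc : CPol T S U,
        IsQPol πe ∧ IsCPol πc ∧ IsDet πc ∧ r = objective K c lam πe πc} := by
  have hsub : {r : ℝ | ∃ πe : QPol T Z S U, ∃ πc : CPol T S U,
        IsQPol πe ∧ IsCPol πc ∧ IsDet πc ∧ r = objective K c lam πe πc}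
      ⊆ {r : ℝ | ∃ πe : QPol T Z S U, ∃ πc : CPol T S U,
        IsQPol πe ∧ IsCPol πc ∧ r = objective K c lam πe πc} := by
    rintro r ⟨πe, πc, h1, h2, _h3, h4⟩
    exact ⟨πe, πc, h1, h2, h4⟩
  have hne_det : {r : ℝ | ∃ πe : QPol T Z S U, ∃ πc : CPol T S U,
      IsQPol πe ∧ IsCPol πc ∧ IsDet πc ∧ r = objective K c lam πe πc}.Nonempty :=
    ⟨objective K c lam (unifQ T Z S U) (detC T S U),
      unifQ T Z S U, detC T S U, unifQ_isQPol, detC_isCPol, detC_isDet, rfl⟩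
  have hne_all : {r : ℝ | ∃ πe : QPol T Z S U, ∃ πc : CPol T S U,
      IsQPol πe ∧ IsCPol πc ∧ r = objective K c lam πe πc}.Nonempty :=
    ⟨objective K c lam (unifQ T Z S U) (detC T S U),
      unifQ T Z S U, detC T S U, unifQ_isQPol, detC_isCPol, rfl⟩
  have hlb : ∀ r ∈ {r : ℝ | ∃ πe : QPol T Z S U, ∃ πc : CPol T S U,
      IsQPol πe ∧ IsCPol πc ∧ r = objective K c lam πe πc},
      (-((T : ℝ) * (Fintype.card (Traj T X Y Z S U) : ℝ) * ∑ p, |c p|)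
        - lam * ((Fintype.card ((Fin T → S) × (Fin T → U)) : ℝ)
          * (Fintype.card (Fin T → Y) : ℝ)
          * (1 + 2 * (Fintype.card (Traj T X Y Z S U) : ℝ)
            * Real.log (Fintype.card (Traj T X Y Z S U))))) ≤ r := by
    rintro r ⟨πe, πc, h1, h2, h4⟩
    have hec := expCost_lb (K := K) h1 h2 c
    have hmi := MI_lb (P := joint K πe πc) (fun ω => (trS ω, trU ω))
      (fun ω => trY ω) (joint_nonneg h1 h2) (joint_le_one h1 h2)
    have hmi' := mul_le_mul_of_nonneg_left hmi hlam
    rw [h4, objective]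
    nlinarith [hmi']
  have hbdd : BddBelow {r : ℝ | ∃ πe : QPol T Z S U, ∃ πc : CPol T S U,
      IsQPol πe ∧ IsCPol πc ∧ r = objective K c lam πe πc} := ⟨_, hlb⟩
  have hbdd_det : BddBelow {r : ℝ | ∃ πe : QPol T Z S U, ∃ πc : CPol T S U,
      IsQPol πe ∧ IsCPol πc ∧ IsDet πc ∧ r = objective K c lam πe πc} :=
    BddBelow.mono hsub hbdd
  refine le_antisymm (csInf_le_csInf hbdd hne_det hsub) ?_
  refine le_csInf hne_all ?_
  rintro r ⟨πe, πc, h1, h2, h4⟩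
  obtain ⟨πc', hc1, hc2, hc3⟩ :=
    purify (K := K) h1 c lam (impure πc).card πc h2 le_rfl
  calc sInf {r : ℝ | ∃ πe : QPol T Z S U, ∃ πc : CPol T S U,
        IsQPol πe ∧ IsCPol πc ∧ IsDet πc ∧ r = objective K c lam πe πc}
      ≤ objective K c lam πe πc' :=
        csInf_le hbdd_det ⟨πe, πc', h1, hc1, hc2, rfl⟩
    _ ≤ objective K c lam πe πc := hc3
    _ = r := h4.symm

end NCS
end
end

section
/- Let Ω be a nonempty finite set and P : ℝ → Ω → ℝ a family of probability mass functions such that P(θ)(ω) > 0 and Σ_{ω ∈ Ω} P(θ)(ω) = 1 for every θ ∈ ℝ, and such that θ ↦ P(θ)(ω) is differentiable for every ω. Let A : Ω → 𝔸 and B : Ω → 𝔹 be maps into finite sets, and for a ∈ 𝔸, b ∈ 𝔹 define the conditional probability P_θ(A = a | B = b) := ( Σ_{ω : A(ω)=a, B(ω)=b} P(θ)(ω) ) / ( Σ_{ω : B(ω)=b} P(θ)(ω) ) whenever the denominator is positive. Then for every θ₀ ∈ ℝ, the expected conditional score vanishes: Σ_{ω ∈ Ω} P(θ₀)(ω) ·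 ( d/dθ|_{θ=θ₀} log P_θ( A = A(ω) | B = B(ω) ) ) = 0. -/
open scoped BigOperators Classical

noncomputable section

namespace NCS

/-- The expected conditional score vanishes: for a
differentiable, strictly positive family of pmfs `P θ` on a nonempty finite set
`Ω` and maps `A : Ω → 𝔸`, `B : Ω → 𝔹` into finite sets, with
`P_θ(A = a | B = b) = pr (P θ) (A = a ∧ B = b) / pr (P θ) (B = b)`,
`Σ_ω P θ₀ ω · (d/dθ|_{θ₀} log P_θ(A = A ω | B = B ω)) = 0`. -/
theorem expected_conditional_score_vanishes
    {Ω 𝔸 𝔹 : Type} [Fintype Ω] [Nonempty Ω] [Fintype 𝔸] [Nonempty 𝔸]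
    [Fintype 𝔹] [Nonempty 𝔹]
    (P : ℝ → Ω → ℝ)
    (hpos : ∀ θ ω, 0 < P θ ω)
    (hsum : ∀ θ, ∑ ω, P θ ω = 1)
    (hdiff : ∀ ω, Differentiable ℝ (fun θ => P θ ω))
    (A : Ω → 𝔸) (B : Ω → 𝔹) (θ₀ : ℝ) :
    ∑ ω, P θ₀ ω *
      deriv (fun θ => Real.log
        (pr (P θ) (fun ω' => A ω' = A ω ∧ B ω' = B ω) /
         pr (P θ) (fun ω' => B ω' = B ω))) θ₀ = 0 := by
  classical
  -- the fiber masses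
  set N : 𝔸 → 𝔹 → ℝ → ℝ := fun a b θ => ∑ ω, if A ω = a ∧ B ω = b then P θ ω else 0 with hNdef
  set D : 𝔹 → ℝ → ℝ := fun b θ => ∑ ω, if B ω = b then P θ ω else 0 with hDdef
  have hNdiff : ∀ (a : 𝔸) (b : 𝔹), Differentiable ℝ (N a b) := by
    intro a b
    refine Differentiable.fun_sum fun ω' _ => ?_
    by_cases h : A ω' = a ∧ B ω' = b
    · simpa [h] using hdiff ω'
    · simp [h]
  have hDdiff : ∀ (b : 𝔹), Differentiable ℝ (D b) := by
    intro b
    refine Differentiable.fun_sum fun ω' _ => ?_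
    by_cases h : B ω' = b
    · simpa [h] using hdiff ω'
    · simp [h]
  have hnonneg : ∀ θ (c : Ω → Prop) (ω' : Ω), (0:ℝ) ≤ if c ω' then P θ ω' else 0 := by
    intro θ c ω'; by_cases h : c ω' <;> simp [h, (hpos θ ω').le]
  have hNpos : ∀ θ (ω : Ω), 0 < N (A ω) (B ω) θ := by
    intro θ ω
    have h1 : P θ ω ≤ N (A ω) (B ω) θ := by
      have := Finset.single_le_sum
        (f := fun ω' => if A ω' = A ω ∧ B ω' = B ω then P θ ω' else 0)
        (fun i _ => by by_cases h : A i = A ω ∧ B i = B ω <;> simp [h, (hpos θ i).le])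
        (Finset.mem_univ ω)
      simpa [hNdef] using this
    exact (hpos θ ω).trans_le h1
  have hDpos : ∀ θ (ω : Ω), 0 < D (B ω) θ := by
    intro θ ω
    have h1 : P θ ω ≤ D (B ω) θ := by
      have := Finset.single_le_sum
        (f := fun ω' => if B ω' = B ω then P θ ω' else 0)
        (fun i _ => by by_cases h : B i = B ω <;> simp [h, (hpos θ i).le])
        (Finset.mem_univ ω)
      simpa [hDdef] using this
    exact (hpos θ ω).trans_le h1
  -- rewrite each derivative of a log-quotient
  have key : ∀ ω : Ω,
      deriv (fun θ => Real.log
        (pr (P θ) (fun ω' => A ω' = A ω ∧ B ω' = B ω) /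
         pr (P θ) (fun ω' => B ω' = B ω))) θ₀
      = deriv (N (A ω) (B ω)) θ₀ / N (A ω) (B ω) θ₀
        - deriv (D (B ω)) θ₀ / D (B ω) θ₀ := by
    intro ω
    have heq : (fun θ => Real.log
        (pr (P θ) (fun ω' => A ω' = A ω ∧ B ω' = B ω) /
         pr (P θ) (fun ω' => B ω' = B ω)))
        = fun θ => Real.log (N (A ω) (B ω) θ) - Real.log (D (B ω) θ) := by
      funext θ
      have h1 : pr (P θ) (fun ω' => A ω' = A ω ∧ B ω' = B ω) = N (A ω) (B ω) θ := by
        rw [hNdef]; unfold pr; congr!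
      have h2 : pr (P θ) (fun ω' => B ω' = B ω) = D (B ω) θ := by
        rw [hDdef]; unfold pr; congr!
      rw [h1, h2, Real.log_div (hNpos θ ω).ne' (hDpos θ ω).ne']
    rw [heq]
    have hN := (hNdiff (A ω) (B ω) θ₀).hasDerivAt.log (hNpos θ₀ ω).ne'
    have hD := (hDdiff (B ω) θ₀).hasDerivAt.log (hDpos θ₀ ω).ne'
    rw [(hN.fun_sub hD).deriv]
  simp only [key]
  -- grouping lemma
  have group : ∀ F : 𝔸 → 𝔹 → ℝ,
      ∑ ω, P θ₀ ω * F (A ω) (B ω) = ∑ a, ∑ b, N a b θ₀ * F a b := by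
    intro F
    have step : ∀ (a : 𝔸) (b : 𝔹), N a b θ₀ * F a b
        = ∑ ω, if A ω = a ∧ B ω = b then P θ₀ ω * F a b else 0 := by
      intro a b
      rw [hNdef]
      rw [Finset.sum_mul]
      refine Finset.sum_congr rfl fun ω _ => ?_
      by_cases h : A ω = a ∧ B ω = b <;> simp [h]
    simp only [step]
    rw [eq_comm]
    calc ∑ a, ∑ b, ∑ ω, (if A ω = a ∧ B ω = b then P θ₀ ω * F a b else 0)
        = ∑ a, ∑ ω, ∑ b, (if A ω = a ∧ B ω = b then P θ₀ ω * F a b else 0) :=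
          Finset.sum_congr rfl fun a _ => Finset.sum_comm
      _ = ∑ ω, ∑ a, ∑ b, (if A ω = a ∧ B ω = b then P θ₀ ω * F a b else 0) :=
          Finset.sum_comm
      _ = ∑ ω, P θ₀ ω * F (A ω) (B ω) := by
          refine Finset.sum_congr rfl fun ω _ => ?_
          simp [ite_and, Finset.sum_ite_eq]
  -- fiber marginal : summing N over a gives D
  have hmargin : ∀ b θ, ∑ a, N a b θ = D b θ := by
    intro b θ
    rw [hNdef, hDdef]
    rw [Finset.sum_comm]
    refine Finset.sum_congr rfl fun ω _ => ?_
    simp [ite_and, Finset.sum_ite_eq]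
  -- total masses
  have hNtot : ∀ θ, ∑ a, ∑ b, N a b θ = 1 := by
    intro θ
    have : ∀ θ, ∑ b, D b θ = 1 := by
      intro θ
      rw [hDdef, Finset.sum_comm]
      simp only [Finset.sum_ite_eq, Finset.mem_univ, if_true]
      exact hsum θ
    calc ∑ a, ∑ b, N a b θ = ∑ b, ∑ a, N a b θ := Finset.sum_comm
      _ = ∑ b, D b θ := Finset.sum_congr rfl fun b _ => hmargin b θ
      _ = 1 := this θ
  have hDtot : ∀ θ, ∑ b, D b θ = 1 := by
    intro θ
    rw [hDdef, Finset.sum_comm]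
    simp only [Finset.sum_ite_eq, Finset.mem_univ, if_true]
    exact hsum θ
  -- nonnegativity → zero mass means identically zero
  have hN0 : ∀ a b, N a b θ₀ = 0 → N a b = fun _ => 0 := by
    intro a b h
    rw [hNdef] at h
    have hall := (Finset.sum_eq_zero_iff_of_nonneg
      (fun ω _ => by by_cases hc : A ω = a ∧ B ω = b <;> simp [hc, (hpos θ₀ ω).le])).mp h
    have hnot : ∀ ω : Ω, ¬(A ω = a ∧ B ω = b) := by
      intro ω hc
      have := hall ω (Finset.mem_univ ω)
      rw [if_pos hc] at this
      exact (hpos θ₀ ω).ne' this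
    funext θ
    rw [hNdef]
    exact Finset.sum_eq_zero fun ω _ => if_neg (hnot ω)
  have hD0 : ∀ b, D b θ₀ = 0 → D b = fun _ => 0 := by
    intro b h
    rw [hDdef] at h
    have hall := (Finset.sum_eq_zero_iff_of_nonneg
      (fun ω _ => by by_cases hc : B ω = b <;> simp [hc, (hpos θ₀ ω).le])).mp h
    have hnot : ∀ ω : Ω, B ω ≠ b := by
      intro ω hc
      have := hall ω (Finset.mem_univ ω)
      rw [if_pos hc] at this
      exact (hpos θ₀ ω).ne' this
    funext θ
    rw [hDdef]
    exact Finset.sum_eq_zero fun ω _ => if_neg (hnot ω)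
  -- the two grouped sums
  have main1 : ∑ ω, P θ₀ ω * (deriv (N (A ω) (B ω)) θ₀ / N (A ω) (B ω) θ₀) = 0 := by
    calc ∑ ω, P θ₀ ω * (deriv (N (A ω) (B ω)) θ₀ / N (A ω) (B ω) θ₀)
        = ∑ a, ∑ b, N a b θ₀ * (deriv (N a b) θ₀ / N a b θ₀) :=
          group (fun a b => deriv (N a b) θ₀ / N a b θ₀)
      _ = ∑ a, ∑ b, deriv (N a b) θ₀ := by
          refine Finset.sum_congr rfl fun a _ => Finset.sum_congr rfl fun b _ => ?_
          rcases eq_or_ne (N a b θ₀) 0 with h | h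
          · rw [h, hN0 a b h]
            simp
          · rw [mul_comm, div_mul_cancel₀ _ h]
      _ = deriv (fun θ => ∑ a, ∑ b, N a b θ) θ₀ := by
          rw [deriv_fun_sum fun a _ => (Differentiable.fun_sum
              fun b _ => hNdiff a b).differentiableAt]
          exact Finset.sum_congr rfl fun a _ => by
            rw [deriv_fun_sum fun b _ => (hNdiff a b).differentiableAt]
      _ = deriv (fun _ : ℝ => (1:ℝ)) θ₀ := by
          congr 1; funext θ; exact hNtot θ
      _ = 0 := deriv_const _ _
  have main2 : ∑ ω, P θ₀ ω * (deriv (D (B ω)) θ₀ / D (B ω) θ₀) = 0 := by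
    calc ∑ ω, P θ₀ ω * (deriv (D (B ω)) θ₀ / D (B ω) θ₀)
        = ∑ a, ∑ b, N a b θ₀ * (deriv (D b) θ₀ / D b θ₀) :=
          group (fun a b => deriv (D b) θ₀ / D b θ₀)
      _ = ∑ b, (∑ a, N a b θ₀) * (deriv (D b) θ₀ / D b θ₀) := by
          rw [Finset.sum_comm]
          exact Finset.sum_congr rfl fun b _ => (Finset.sum_mul _ _ _).symm
      _ = ∑ b, D b θ₀ * (deriv (D b) θ₀ / D b θ₀) := by
          exact Finset.sum_congr rfl fun b _ => by rw [hmargin]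
      _ = ∑ b, deriv (D b) θ₀ := by
          refine Finset.sum_congr rfl fun b _ => ?_
          rcases eq_or_ne (D b θ₀) 0 with h | h
          · rw [h, hD0 b h]
            simp
          · rw [mul_comm, div_mul_cancel₀ _ h]
      _ = deriv (fun θ => ∑ b, D b θ) θ₀ := by
          rw [deriv_fun_sum fun b _ => (hDdiff b).differentiableAt]
      _ = deriv (fun _ : ℝ => (1:ℝ)) θ₀ := by
          congr 1; funext θ; exact hDtot θ
      _ = 0 := deriv_const _ _
  calc ∑ ω, P θ₀ ω * (deriv (N (A ω) (B ω)) θ₀ / N (A ω) (B ω) θ₀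
          - deriv (D (B ω)) θ₀ / D (B ω) θ₀)
      = ∑ ω, (P θ₀ ω * (deriv (N (A ω) (B ω)) θ₀ / N (A ω) (B ω) θ₀)
          - P θ₀ ω * (deriv (D (B ω)) θ₀ / D (B ω) θ₀)) := by
        exact Finset.sum_congr rfl fun ω _ => mul_sub _ _ _
    _ = 0 := by rw [Finset.sum_sub_distrib, main1, main2, sub_zero]

end NCS
end
end
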